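/- Let β > 0 with β ≠ 1 and let r ∈ (0,1) satisfy 3(1−(1−r)^{1−β})/(1−β) < 2((1−r)^{−β} − 1)/β. Then there exists p ∈ (0,1) such that the sequence defined by a_0 = p and a_k = (1−p²)p^{k−1} for k ≥ 1 satisfies Σ_{k=0}^∞ r^k · (1/(k+1)) · Σ_{n=0}^k (Γ(k−n+β)/(Γ(k−n+1)Γ(β))) · a_n > (1/r) · (1−(1−r)^{1−β})/(1−β). -/

import Mathlib

/-!
Write `c β j = Γ(j + β) / (j! Γ(β))`; this is `Ring.multichoose β j`, the `j`-th coefficient of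
`(1 - x) ^ (-β)`. From `(k + 1) c (β - 1) (k + 1) = (β - 1) c β k` and the binomial series of
`(1 - x) ^ (1 - β)` one gets `L := ∑ c β k r ^ k / (k + 1) = (1 - (1 - r) ^ (1 - β)) / ((1 - β) r)`.

For the extremal coefficients the Cesàro sum splits as `p L + (1 - p²) U(p)` with
`U(p) = ∑ r ^ k / (k + 1) ∑_{n < k} c β (k - 1 - n) p ^ n`, so it exceeds `L` iff
`(1 + p) U(p) > L` (the difference is `(1 - p) ((1 + p) U(p) - L)`). By dominated convergence
`U(p) → U(1)` as `p → 1⁻`, and the hockey-stick identity `∑_{j < k} c β j = c (β + 1) k - c β k`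
gives `U(1) = ((1 - r) ^ (-β) - 1) / (β r) - L`. The hypothesis on `r` is exactly `L < 2 U(1)`.
-/

open Real Finset Filter Topology
open scoped Nat

lemma Real.Gamma_add_nat_div_Gamma {a : ℝ} (ha : ∀ m : ℕ, a ≠ -m) (n : ℕ) :
    Gamma (a + n) / Gamma a = (ascPochhammer ℝ n).eval a := by
  induction n with
  | zero => simp [Gamma_ne_zero ha]
  | succ n ih =>
    have hn : a + n ≠ 0 := fun h => ha n (by linarith)
    rw [ascPochhammer_succ_eval, ← ih, Nat.cast_succ, ← add_assoc, Gamma_add_one hn]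
    ring

namespace Ring

lemma sum_range_succ_multichoose {R : Type*} [NonAssocSemiring R] [Pow R ℕ] [NatPowAssoc R]
    [BinomialRing R] (a : R) (k : ℕ) :
    ∑ j ∈ range (k + 1), multichoose a j = multichoose (a + 1) k := by
  induction k with
  | zero => simp
  | succ k ih => rw [sum_range_succ, ih, multichoose_succ_succ, add_comm]

variable {K : Type*} [Field K] [CharZero K]

lemma multichoose_eq_ascPochhammer_div (a : K) (n : ℕ) :
    multichoose a n = (ascPochhammer K n).eval a / n ! := by
  rw [eq_div_iff (Nat.cast_ne_zero.mpr n.factorial_ne_zero),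
    ← Polynomial.ascPochhammer_smeval_eq_eval, ← factorial_nsmul_multichoose_eq_ascPochhammer,
    nsmul_eq_mul, mul_comm]

lemma succ_mul_multichoose_sub_one_succ (a : K) (k : ℕ) :
    (k + 1) * multichoose (a - 1) (k + 1) = (a - 1) * multichoose a k := by
  simp only [multichoose_eq_ascPochhammer_div, ascPochhammer_succ_left,
    Polynomial.eval_mul, Polynomial.eval_X, Polynomial.eval_comp, Polynomial.eval_add,
    Polynomial.eval_one, sub_add_cancel, Nat.factorial_succ, Nat.cast_mul, Nat.cast_succ]
  field_simp

lemma multichoose_pos [LinearOrder K] [IsStrictOrderedRing K] {a : K} (ha : 0 < a) (n : ℕ) :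
    0 < multichoose a n := by
  rw [multichoose_eq_ascPochhammer_div]
  exact div_pos (ascPochhammer_pos n a ha) (by positivity)

end Ring

lemma Real.hasSum_multichoose_mul_pow (a : ℝ) {x : ℝ} (hx : |x| < 1) :
    HasSum (fun n => Ring.multichoose a n * x ^ n) ((1 - x) ^ (-a)) := by
  have h := (one_div_one_sub_rpow_hasFPowerSeriesOnBall_zero a).hasSum
    (y := x) (by simpa [enorm_eq_nnnorm, ← NNReal.coe_lt_one] using hx)
  simp only [FormalMultilinearSeries.ofScalars_apply_eq, smul_eq_mul, zero_add] at h
  rw [rpow_neg (by linarith [le_abs_self x]), inv_eq_one_div]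
  simpa only [Ring.multichoose_eq] using h

lemma Real.hasSum_multichoose_mul_pow_div_succ {a x : ℝ} (ha : a ≠ 1) (hx0 : x ≠ 0)
    (hx : |x| < 1) :
    HasSum (fun k => Ring.multichoose a k * x ^ k / (k + 1))
      ((1 - (1 - x) ^ (1 - a)) / (1 - a) / x) := by
  have ha' : a - 1 ≠ 0 := sub_ne_zero.mpr ha
  have h := (hasSum_nat_add_iff' 1).mpr (hasSum_multichoose_mul_pow (a - 1) hx)
  simp only [sum_range_one, Ring.multichoose_zero_right, pow_zero, mul_one, neg_sub] at h
  have hval :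
      ((1 - x) ^ (1 - a) - 1) / ((a - 1) * x) = (1 - (1 - x) ^ (1 - a)) / (1 - a) / x := by
    rw [← neg_sub 1 a, div_div, neg_mul, div_neg, ← neg_div, neg_sub]
  refine hval ▸ (h.div_const ((a - 1) * x)).congr_fun fun k => ?_
  have hk : (k : ℝ) + 1 ≠ 0 := by positivity
  field_simp
  linear_combination -x ^ (k + 1) * Ring.succ_mul_multichoose_sub_one_succ a k

noncomputable def cesaroCoeff (β : ℝ) (j : ℕ) : ℝ :=
  Gamma (j + β) / (Gamma (j + 1) * Gamma β)

lemma cesaroCoeff_eq_multichoose {β : ℝ} (hβ : ∀ m : ℕ, β ≠ -m) (j : ℕ) :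
    cesaroCoeff β j = Ring.multichoose β j := by
  rw [cesaroCoeff, Gamma_nat_eq_factorial, Ring.multichoose_eq_ascPochhammer_div,
    ← Gamma_add_nat_div_Gamma hβ, add_comm β, div_mul_eq_div_div_swap]

noncomputable def extremalCoeff (p : ℝ) (n : ℕ) : ℝ :=
  if n = 0 then p else (1 - p ^ 2) * p ^ (n - 1)

/-- The `k`-th term of the Cesàro sum for the coefficient sequence `0, 1, p, p², …`. -/
noncomputable def cesaroGeomTerm (c : ℕ → ℝ) (r p : ℝ) (k : ℕ) : ℝ :=
  r ^ k / (k + 1) * ∑ n ∈ range k, c (k - 1 - n) * p ^ n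

lemma sum_range_succ_mul_extremalCoeff (c : ℕ → ℝ) (p : ℝ) (k : ℕ) :
    ∑ n ∈ range (k + 1), c (k - n) * extremalCoeff p n =
      p * c k + (1 - p ^ 2) * ∑ n ∈ range k, c (k - 1 - n) * p ^ n := by
  rw [sum_range_succ', mul_sum, add_comm]
  congr 1
  · simp [extremalCoeff, mul_comm]
  · refine sum_congr rfl fun n _ => ?_
    simp only [extremalCoeff, Nat.add_one_ne_zero, if_false, Nat.add_sub_cancel,
      show k - (n + 1) = k - 1 - n by omega]
    ring

lemma hasSum_cesaro_extremalCoeff {c : ℕ → ℝ} {r p A U : ℝ}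
    (hA : HasSum (fun k : ℕ => c k * r ^ k / (k + 1)) A)
    (hU : HasSum (cesaroGeomTerm c r p) U) :
    HasSum (fun k : ℕ => r ^ k * ((1 / (k + 1 : ℝ)) *
        ∑ n ∈ range (k + 1), c (k - n) * extremalCoeff p n))
      (p * A + (1 - p ^ 2) * U) := by
  refine ((hA.mul_left p).add (hU.mul_left (1 - p ^ 2))).congr_fun fun k => ?_
  rw [sum_range_succ_mul_extremalCoeff, cesaroGeomTerm]
  ring

section Nonneg

variable {c : ℕ → ℝ} {r : ℝ}

lemma norm_cesaroGeomTerm_le (hc : ∀ j, 0 ≤ c j) (hr : 0 ≤ r) {p : ℝ} (hp : p ∈ Set.Icc 0 1)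
    (k : ℕ) : ‖cesaroGeomTerm c r p k‖ ≤ cesaroGeomTerm c r 1 k := by
  have hterm (n : ℕ) : 0 ≤ c (k - 1 - n) * p ^ n := mul_nonneg (hc _) (pow_nonneg hp.1 n)
  unfold cesaroGeomTerm
  rw [norm_of_nonneg (mul_nonneg (by positivity) (sum_nonneg fun n _ => hterm n))]
  refine mul_le_mul_of_nonneg_left (sum_le_sum fun n _ => ?_) (by positivity)
  rw [one_pow, mul_one]
  exact mul_le_of_le_one_right (hc _) (pow_le_one₀ hp.1 hp.2)

lemma summable_cesaroGeomTerm (hc : ∀ j, 0 ≤ c j) (hr : 0 ≤ r)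
    (hsum : Summable (cesaroGeomTerm c r 1)) {p : ℝ} (hp : p ∈ Set.Icc 0 1) :
    Summable (cesaroGeomTerm c r p) :=
  hsum.of_norm_bounded (norm_cesaroGeomTerm_le hc hr hp)

lemma tendsto_tsum_cesaroGeomTerm (hc : ∀ j, 0 ≤ c j) (hr : 0 ≤ r)
    (hsum : Summable (cesaroGeomTerm c r 1)) :
    Tendsto (fun p => ∑' k, cesaroGeomTerm c r p k) (𝓝[<] 1)
      (𝓝 (∑' k, cesaroGeomTerm c r 1 k)) := by
  refine tendsto_tsum_of_dominated_convergence hsum (fun k => ?_) ?_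
  · have : Continuous (cesaroGeomTerm c r · k) := by unfold cesaroGeomTerm; fun_prop
    exact this.continuousAt.tendsto.mono_left nhdsWithin_le_nhds
  · filter_upwards [Ioo_mem_nhdsLT one_pos] with p hp
    exact norm_cesaroGeomTerm_le hc hr (Set.Ioo_subset_Icc_self hp)

end Nonneg

lemma cesaroGeomTerm_multichoose_one (a r : ℝ) (k : ℕ) :
    cesaroGeomTerm (Ring.multichoose a) r 1 k =
      Ring.multichoose (a + 1) k * r ^ k / (k + 1) - Ring.multichoose a k * r ^ k / (k + 1) := by
  have hsum := Ring.sum_range_succ_multichoose a k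
  rw [sum_range_succ] at hsum
  simp only [cesaroGeomTerm, one_pow, mul_one, sum_range_reflect (Ring.multichoose a) k]
  rw [← hsum]
  ring

/-- Sharpness of the Bohr-type inequality for the β-Cesàro operator
(sharpness part of Theorem 2.1). -/
theorem cesaro_bohr_beta_sharp (β : ℝ) (hβ : 0 < β) (hβ1 : β ≠ 1)
    (r : ℝ) (hr : r ∈ Set.Ioo (0 : ℝ) 1)
    (hR : 3 * (1 - (1 - r) ^ (1 - β)) / (1 - β) < 2 * ((1 - r) ^ (-β) - 1) / β) :
    ∃ p ∈ Set.Ioo (0 : ℝ) 1,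
      (1 / r) * ((1 - (1 - r) ^ (1 - β)) / (1 - β)) <
        ∑' k : ℕ, r ^ k * ((1 / (k + 1 : ℝ)) *
          ∑ n ∈ Finset.range (k + 1),
            Real.Gamma (((k - n : ℕ) : ℝ) + β) /
              (Real.Gamma (((k - n : ℕ) : ℝ) + 1) * Real.Gamma β) *
            (if n = 0 then p else (1 - p ^ 2) * p ^ (n - 1))) := by
  obtain ⟨hr0, hr1⟩ := hr
  have habs : |r| < 1 := by rwa [abs_of_pos hr0]
  set c := Ring.multichoose β
  set A := (1 - (1 - r) ^ (1 - β)) / (1 - β) / r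
  set B := ((1 - r) ^ (-β) - 1) / β / r
  have hA : HasSum (fun k : ℕ => c k * r ^ k / (k + 1)) A :=
    hasSum_multichoose_mul_pow_div_succ hβ1 hr0.ne' habs
  have hB : HasSum (fun k : ℕ => Ring.multichoose (β + 1) k * r ^ k / (k + 1)) B := by
    convert hasSum_multichoose_mul_pow_div_succ (a := β + 1) (by simpa using hβ.ne') hr0.ne' habs
      using 1
    rw [show 1 - (β + 1) = -β by ring, div_neg, ← neg_div, neg_sub]
  have hc : ∀ j, 0 ≤ c j := fun j => (Ring.multichoose_pos hβ j).le
  have hM : HasSum (cesaroGeomTerm c r 1) (B - A) :=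
    (hB.sub hA).congr_fun fun k => cesaroGeomTerm_multichoose_one β r k
  have hlim : Tendsto (fun p => (1 + p) * ∑' k, cesaroGeomTerm c r p k) (𝓝[<] 1)
      (𝓝 ((1 + 1) * (B - A))) :=
    (tendsto_const_nhds.add (tendsto_nhdsWithin_of_tendsto_nhds tendsto_id)).mul
      (hM.tsum_eq ▸ tendsto_tsum_cesaroGeomTerm hc hr0.le hM.summable)
  have hAB : A < (1 + 1) * (B - A) := by
    rw [mul_div_assoc, mul_div_assoc] at hR
    simp only [A, B, ← sub_div, one_add_one_eq_two, ← mul_div_assoc]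
    rw [div_lt_div_iff_of_pos_right hr0]
    linarith
  obtain ⟨p, hpU, hp⟩ :=
    ((hlim.eventually (eventually_gt_nhds hAB)).and (Ioo_mem_nhdsLT one_pos)).exists
  refine ⟨p, hp, ?_⟩
  have hU := (summable_cesaroGeomTerm hc hr0.le hM.summable (Set.Ioo_subset_Icc_self hp)).hasSum
  have hsum := hasSum_cesaro_extremalCoeff hA hU
  have hβℕ : ∀ m : ℕ, β ≠ -m := fun m => ((neg_nonpos.2 m.cast_nonneg).trans_lt hβ).ne'
  simp only [c, ← cesaroCoeff_eq_multichoose hβℕ] at hsum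
  unfold cesaroCoeff extremalCoeff at hsum
  rw [one_div_mul_eq_div, hsum.tsum_eq]
  linear_combination mul_pos (sub_pos.2 hp.2) (sub_pos.2 hpU)
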